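/- arXiv:1712.06373 — 5 statements merged into one kernel-verified Lean document; each statement's English description precedes it below -/
import Mathlib

section
/- Let $u_0,\ldots,u_{2M} : D \to \mathbb{R}$ be $C^{2M}$ functions on an interval $D$ and let $x_0 \in D$. Define, for $t \in D \setminus \{x_0\}$, $E(t) = \frac{(2M)!}{(t-x_0)^{2M}} \det B(t)$, where $B(t)$ is the $(2M+1)\times(2M+1)$ matrix whose first row is $(u_0(t),\ldots,u_{2M}(t))$ and whose remaining $2M$ rows are $(u_j^{(k)}(x_0))_j$ for $k=0,\ldots,2M-1$. Then $E$ extends continuously to $D$ with value at $x_0$ equal to the determinant of the matrix whose rows are $(u_j^{(k)}(x_0))_j$ for $k=0,\ldots,2M$. -/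
/-!
Subtracting from the first row of `B(t)` the combination `∑_{k<2M} (t - x₀)^k / k! • (row k+1)`
leaves the determinant unchanged and turns the first row into the Taylor remainders
`u_j(t) - T_{2M-1} u_j(t)`. So `E(t)` is the determinant of the matrix whose first row is
`(2M)! (u_j(t) - T_{2M-1} u_j(t)) / (t - x₀)^{2M}`, which tends to `u_j^{(2M)}(x₀)` by Taylor's
theorem. The limit matrix is the derivative matrix with its last row moved to the top, a cyclic
permutation of sign `(-1)^{2M} = 1`.
-/

open Set Filter Topology Finset
open scoped Nat

namespace Matrix

theorem of_ite_val_eq_zero_eq_of_vecCons {α m : Type*} {n : ℕ} (v : m → α) (r : ℕ → m → α) :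
    (of fun (k : Fin (n + 1)) j => if k.val = 0 then v j else r (k.val - 1) j)
      = of (vecCons v fun i : Fin n => r i) := by
  ext k j
  cases k using Fin.cases <;> simp

variable {R : Type*} [CommRing R] {n : ℕ}

theorem det_of_vecCons_smul_sub_sum_smul (c : R) (v : Fin (n + 1) → R)
    (A : Fin n → Fin (n + 1) → R) (a : Fin n → R) :
    det (of (vecCons (c • (v - ∑ i, a i • A i)) A)) = c * det (of (vecCons v A)) := by
  set B : Matrix (Fin (n + 1)) (Fin (n + 1)) R := of (vecCons v A)
  have hrow (w : Fin (n + 1) → R) : of (vecCons w A) = updateRow B 0 w := by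
    ext k j
    cases k using Fin.cases <;> simp [B]
  have hsum : v - ∑ i, a i • A i = ∑ k, (vecCons 1 (-a) : Fin (n + 1) → R) k • B k := by
    simp only [B, sub_eq_add_neg, Fin.sum_univ_succ, cons_val_zero, one_smul, cons_val_succ,
      Pi.neg_apply, neg_smul, sum_neg_distrib]
    rfl
  rw [hrow, det_updateRow_smul, ← hrow, hsum, hrow, det_updateRow_sum]
  simp

theorem det_of_vecCons_removeNth (A : Fin (n + 1) → Fin (n + 1) → R) (i : Fin (n + 1)) :
    det (of (vecCons (A i) (i.removeNth A))) = (-1) ^ (i : ℕ) * det (of A) := by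
  have : of (vecCons (A i) (i.removeNth A)) = (of A).submatrix i.cycleRange.symm id :=
    congrArg of (Fin.cons_removeNth_eq_comp_cycleRange_symm A i)
  rw [this, det_permute, Equiv.Perm.sign_symm, Fin.sign_cycleRange]
  simp

theorem det_of_ite_val_eq_zero_of_last (r : ℕ → Fin (n + 1) → R) :
    det (of fun (k : Fin (n + 1)) j => if k.val = 0 then r n j else r (k.val - 1) j)
      = (-1) ^ n * det (of fun (k : Fin (n + 1)) j => r k j) := by
  have hrot := det_of_vecCons_removeNth (fun k j => r k j) (Fin.last n)
  rw [Fin.removeNth_last, Fin.val_last] at hrot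
  rw [of_ite_val_eq_zero_eq_of_vecCons]
  exact hrot

end Matrix

noncomputable def taylorQuotient (f : ℝ → ℝ) (N : ℕ) (x₀ t : ℝ) : ℝ :=
  N ! / (t - x₀) ^ N * (f t - ∑ k ∈ range N, (t - x₀) ^ k / k ! * iteratedDeriv k f x₀)

theorem taylorWithinEval_univ (f : ℝ → ℝ) (n : ℕ) (x₀ x : ℝ) :
    taylorWithinEval f n univ x₀ x
      = ∑ k ∈ range (n + 1), (x - x₀) ^ k / k ! * iteratedDeriv k f x₀ := by
  simp [taylor_within_apply, iteratedDerivWithin_univ, div_eq_inv_mul]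

theorem tendsto_taylorQuotient {f : ℝ → ℝ} {N : ℕ} (hf : ContDiff ℝ N f) (x₀ : ℝ) :
    Tendsto (taylorQuotient f N x₀) (𝓝[≠] x₀) (𝓝 (iteratedDeriv N f x₀)) := by
  have hlim : Tendsto (fun t => (f t - taylorWithinEval f N univ x₀ t) / (t - x₀) ^ N)
      (𝓝[≠] x₀) (𝓝 0) := by
    simpa using (Real.taylor_tendsto convex_univ (mem_univ x₀) hf.contDiffOn).mono_left
      (nhdsWithin_mono x₀ (subset_univ _))
  have hsplit : ∀ t ≠ x₀, taylorQuotient f N x₀ t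
      = N ! * ((f t - taylorWithinEval f N univ x₀ t) / (t - x₀) ^ N) + iteratedDeriv N f x₀ := by
    intro t ht
    have hpow : (t - x₀) ^ N ≠ 0 := pow_ne_zero _ (sub_ne_zero.2 ht)
    rw [taylorQuotient, taylorWithinEval_univ, sum_range_succ]
    field_simp
    ring
  have hlim' := (hlim.const_mul (N ! : ℝ)).add_const (iteratedDeriv N f x₀)
  rw [mul_zero, zero_add] at hlim'
  exact hlim'.congr' (eventually_nhdsWithin_of_forall fun t ht => (hsplit t ht).symm)

theorem continuous_update_taylorQuotient {f : ℝ → ℝ} {N : ℕ} (hf : ContDiff ℝ N f) (x₀ : ℝ) :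
    Continuous (Function.update (taylorQuotient f N x₀) x₀ (iteratedDeriv N f x₀)) := by
  refine continuous_iff_continuousAt.2 fun t => ?_
  rcases eq_or_ne t x₀ with rfl | ht
  · exact continuousAt_update_same.2 (tendsto_taylorQuotient hf t)
  · have hfc := hf.continuous
    have hpow : (t - x₀) ^ N ≠ 0 := pow_ne_zero _ (sub_ne_zero.2 ht)
    rw [continuousAt_update_of_ne ht]
    unfold taylorQuotient
    fun_prop (disch := assumption)

theorem det_of_taylorQuotient_row {n : ℕ} (u : Fin (n + 1) → ℝ → ℝ) {x₀ t : ℝ} :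
    (Matrix.of fun k j : Fin (n + 1) =>
      if k.val = 0 then taylorQuotient (u j) n x₀ t else iteratedDeriv (k.val - 1) (u j) x₀).det
      = n ! / (t - x₀) ^ n * (Matrix.of fun k j : Fin (n + 1) =>
          if k.val = 0 then u j t else iteratedDeriv (k.val - 1) (u j) x₀).det := by
  rw [Matrix.of_ite_val_eq_zero_eq_of_vecCons _ fun k j => iteratedDeriv k (u j) x₀,
    Matrix.of_ite_val_eq_zero_eq_of_vecCons _ fun k j => iteratedDeriv k (u j) x₀,
    ← Matrix.det_of_vecCons_smul_sub_sum_smul _ _ _ fun i : Fin n => (t - x₀) ^ (i : ℕ) / (i : ℕ) !]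
  congr 3
  ext j
  simp [taylorQuotient, sum_range]

theorem stmt1_general (M : ℕ) (D : Set ℝ)
    (u : Fin (2 * M + 1) → ℝ → ℝ) (hu : ∀ j, ContDiff ℝ (2 * M) (u j))
    (x0 : ℝ) :
    ∃ F : ℝ → ℝ, ContinuousOn F D ∧
      (∀ t ∈ D, t ≠ x0 →
        F t = (((2 * M).factorial : ℝ) / (t - x0) ^ (2 * M)) *
          (Matrix.of fun k j : Fin (2 * M + 1) =>
            if k.val = 0 then u j t else iteratedDeriv (k.val - 1) (u j) x0).det) ∧
      F x0 = (Matrix.of fun k j : Fin (2 * M + 1) => iteratedDeriv k.val (u j) x0).det := by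
  set G := fun j => Function.update (taylorQuotient (u j) (2 * M) x0) x0
    (iteratedDeriv (2 * M) (u j) x0)
  have hG (j) : Continuous (G j) := continuous_update_taylorQuotient (by exact_mod_cast hu j) x0
  refine ⟨fun t => (Matrix.of fun k j : Fin (2 * M + 1) =>
    if k.val = 0 then G j t else iteratedDeriv (k.val - 1) (u j) x0).det, ?_, ?_, ?_⟩
  · refine (Continuous.matrix_det (continuous_matrix fun k j => ?_)).continuousOn
    simp only [Matrix.of_apply]
    split_ifs
    exacts [hG j, continuous_const]
  · intro t _ ht
    simp only [G, Function.update_of_ne ht]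
    exact det_of_taylorQuotient_row u
  · simp only [G, Function.update_self]
    rw [Matrix.det_of_ite_val_eq_zero_of_last fun k j => iteratedDeriv k (u j) x0,
      (even_two_mul M).neg_one_pow, one_mul]

/-- Lemma 3.5 of the paper, second part: the rescaled determinant `E` extends
continuously to `D`, with value at `x₀` given by the full derivative-matrix determinant. -/
theorem stmt1 (M : ℕ) (hM : 1 ≤ M) (D : Set ℝ) (hD : D.OrdConnected)
    (u : Fin (2 * M + 1) → ℝ → ℝ) (hu : ∀ j, ContDiff ℝ (2 * M) (u j))
    (x0 : ℝ) (hx0 : x0 ∈ D) :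
    ∃ F : ℝ → ℝ, ContinuousOn F D ∧
      (∀ t ∈ D, t ≠ x0 →
        F t = (((2 * M).factorial : ℝ) / (t - x0) ^ (2 * M)) *
          (Matrix.of fun k j : Fin (2 * M + 1) =>
            if k.val = 0 then u j t else iteratedDeriv (k.val - 1) (u j) x0).det) ∧
      F x0 = (Matrix.of fun k j : Fin (2 * M + 1) => iteratedDeriv k.val (u j) x0).det :=
  stmt1_general M D u hu x0
end

section
/- Let $\mu$ be a positive measure on $S \subseteq \mathbb{R}$ and $\theta$ a kernel with all relevant products integrable. If the determinant function $(s_1,\ldots,s_M) \mapsto \det(\theta(t_i,s_j))_{i,j}$ is strictly positive $\mu^{\otimes M}$-a.e. on the ordered simplex $\{s_1 < \cdots < s_M\}$ and the support of $\mu$ contains at least $M$ points, then the Gram matrix with entries $G_{ij} = \int_S \theta(t_i,s)\theta(t_j,s)\,d\mu(s)$ satisfies $\det G > 0$. -/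
/-!
Expanding the Gram determinant over permutations and applying Fubini gives
`det G = ∫ det(θ(tᵢ, sⱼ)) · ∏ⱼ θ(tⱼ, sⱼ) dμ^M`. Permuting the coordinates preserves `μ^M` and
multiplies `det(θ(tᵢ, sⱼ))` by the sign of the permutation, so averaging over all `M!` orderings
turns the integrand into `det(θ(tᵢ, sⱼ))²` (Andréief's identity). This square is nonnegative and
a.e. positive on the ordered simplex, which is open and contains the increasing enumeration of
`M` points of the support of `μ`, hence has positive measure.
-/

open MeasureTheory
open scoped BigOperators

/-- The (topological) support of a measure on `ℝ`: points all of whose neighborhoods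
have positive measure. -/
def measureSupport (μ : Measure ℝ) : Set ℝ := {x | ∀ U ∈ nhds x, 0 < μ U}

open Equiv Filter Topology

section KernelMatrix

variable {X ι : Type*} [Fintype ι] [DecidableEq ι] (f g : ι → X → ℝ)

lemma det_mul_prod_eq_sum_perm (s : ι → X) :
    (Matrix.of fun i j => f i (s j)).det * ∏ j, g j (s j) =
      ∑ σ : Perm ι, (Perm.sign σ : ℝ) * ∏ j, f (σ j) (s j) * g j (s j) := by
  rw [Matrix.det_apply, Finset.sum_mul]
  refine Finset.sum_congr rfl fun σ _ => ?_
  rw [Units.smul_def, zsmul_eq_mul, mul_assoc, ← Finset.prod_mul_distrib]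
  rfl

lemma sum_perm_det_comp_mul_prod (s : ι → X) :
    ∑ σ : Perm ι, (Matrix.of fun i j => f i ((s ∘ σ) j)).det * ∏ j, g j ((s ∘ σ) j) =
      (Matrix.of fun i j => f i (s j)).det * (Matrix.of fun i j => g i (s j)).det := by
  have hperm (σ : Perm ι) : (Matrix.of fun i j => f i ((s ∘ σ) j)) =
      (Matrix.of fun i j => f i (s j)).submatrix id σ := rfl
  rw [← Matrix.det_transpose (Matrix.of fun i j => g i (s j)),
    Matrix.det_apply' (Matrix.of fun i j => g i (s j)).transpose, Finset.mul_sum]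
  refine Finset.sum_congr rfl fun σ _ => ?_
  rw [hperm, Matrix.det_permute']
  simp only [Matrix.transpose_apply, Matrix.of_apply, Function.comp_apply]
  ring

end KernelMatrix

section Andreief

variable {X ι : Type*} [MeasurableSpace X]

lemma coe_piCongrLeft_symm_eq_comp (σ : Perm ι) :
    ⇑(MeasurableEquiv.piCongrLeft (fun _ => X) σ.symm) = fun s => s ∘ σ := by
  funext s i
  simp [MeasurableEquiv.coe_piCongrLeft, Equiv.piCongrLeft_apply_eq_cast]

variable [Fintype ι] {μ : Measure X}

lemma integral_comp_perm [SigmaFinite μ] (σ : Perm ι) (F : (ι → X) → ℝ) :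
    ∫ s, F (s ∘ σ) ∂(Measure.pi fun _ => μ) = ∫ s, F s ∂(Measure.pi fun _ => μ) := by
  simpa [coe_piCongrLeft_symm_eq_comp] using
    (measurePreserving_piCongrLeft (fun _ => μ) σ.symm).integral_comp' F

lemma integrable_comp_perm [SigmaFinite μ] {F : (ι → X) → ℝ}
    (hF : Integrable F (Measure.pi fun _ => μ)) (σ : Perm ι) :
    Integrable (fun s => F (s ∘ σ)) (Measure.pi fun _ => μ) := by
  simpa [coe_piCongrLeft_symm_eq_comp, Function.comp_def] using
    (measurePreserving_piCongrLeft (fun _ => μ) σ.symm).integrable_comp_emb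
      (MeasurableEquiv.measurableEmbedding _) |>.mpr hF

variable [DecidableEq ι] {f g : ι → X → ℝ}

lemma integrable_det_mul_prod
    (hfg : ∀ σ : Perm ι, Integrable (fun s => ∏ j, f (σ j) (s j) * g j (s j))
      (Measure.pi fun _ => μ)) :
    Integrable (fun s => (Matrix.of fun i j => f i (s j)).det * ∏ j, g j (s j))
      (Measure.pi fun _ => μ) := by
  simp_rw [det_mul_prod_eq_sum_perm]
  exact integrable_finsetSum _ fun σ _ => (hfg σ).const_mul _

variable [SigmaFinite μ]

lemma det_integral_mul_eq_integral_det_mul_prod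
    (hfg : ∀ σ : Perm ι, Integrable (fun s => ∏ j, f (σ j) (s j) * g j (s j))
      (Measure.pi fun _ => μ)) :
    (Matrix.of fun i j => ∫ x, f i x * g j x ∂μ).det =
      ∫ s, (Matrix.of fun i j => f i (s j)).det * ∏ j, g j (s j) ∂(Measure.pi fun _ => μ) := by
  simp_rw [det_mul_prod_eq_sum_perm]
  rw [integral_finsetSum _ fun σ _ => (hfg σ).const_mul _, Matrix.det_apply]
  refine Finset.sum_congr rfl fun σ _ => ?_
  rw [integral_const_mul, integral_fintype_prod_eq_prod (fun j x => f (σ j) x * g j x),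
    Units.smul_def, zsmul_eq_mul]
  rfl

lemma integrable_det_mul_det
    (hfg : ∀ σ : Perm ι, Integrable (fun s => ∏ j, f (σ j) (s j) * g j (s j))
      (Measure.pi fun _ => μ)) :
    Integrable (fun s => (Matrix.of fun i j => f i (s j)).det * (Matrix.of fun i j => g i (s j)).det)
      (Measure.pi fun _ => μ) := by
  simp_rw [← sum_perm_det_comp_mul_prod]
  exact integrable_finsetSum _ fun σ _ => integrable_comp_perm (integrable_det_mul_prod hfg) σ

theorem card_perm_mul_det_integral_mul_eq_integral_det_mul_det
    (hfg : ∀ σ : Perm ι, Integrable (fun s => ∏ j, f (σ j) (s j) * g j (s j))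
      (Measure.pi fun _ => μ)) :
    (Fintype.card (Perm ι) : ℝ) * (Matrix.of fun i j => ∫ x, f i x * g j x ∂μ).det =
      ∫ s, (Matrix.of fun i j => f i (s j)).det * (Matrix.of fun i j => g i (s j)).det
        ∂(Measure.pi fun _ => μ) := by
  simp_rw [← sum_perm_det_comp_mul_prod]
  rw [integral_finsetSum _ fun σ _ => integrable_comp_perm (integrable_det_mul_prod hfg) σ]
  simp_rw [integral_comp_perm _ (fun s => (Matrix.of fun i j => f i (s j)).det * ∏ j, g j (s j))]
  rw [Finset.sum_const, Finset.card_univ, nsmul_eq_mul,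
    det_integral_mul_eq_integral_det_mul_prod hfg]

end Andreief

section OrderedSimplex

lemma measure_pi_pos_of_mem_nhds {ι : Type*} [Fintype ι] {μ : Measure ℝ} [SigmaFinite μ]
    {x : ι → ℝ} (hx : ∀ i, x i ∈ measureSupport μ) {U : Set (ι → ℝ)} (hU : U ∈ 𝓝 x) :
    0 < Measure.pi (fun _ => μ) U := by
  rw [nhds_pi, Filter.mem_pi'] at hU
  obtain ⟨I, u, hu, hsub⟩ := hU
  calc 0 < ∏ i, μ (u i) := CanonicallyOrderedAdd.prod_pos.mpr fun i _ => hx i _ (hu i)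
    _ = Measure.pi (fun _ => μ) (Set.univ.pi u) := (Measure.pi_pi _ u).symm
    _ ≤ Measure.pi (fun _ => μ) U := measure_mono fun y hy => hsub fun i _ => hy i trivial

lemma setOf_strictMono_mem_nhds {M : ℕ} {x : Fin M → ℝ} (hx : StrictMono x) :
    {s : Fin M → ℝ | StrictMono s} ∈ 𝓝 x := by
  show ∀ᶠ s in 𝓝 x, ∀ i j, i < j → s i < s j
  refine eventually_all.2 fun i => eventually_all.2 fun j => ?_
  by_cases hij : i < j
  · exact ((continuous_apply i).tendsto x).eventually_lt ((continuous_apply j).tendsto x)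
      (hx hij) |>.mono fun s hs _ => hs
  · exact Eventually.of_forall fun s h => absurd h hij

lemma measure_pi_setOf_strictMono_pos {M : ℕ} {μ : Measure ℝ} [SigmaFinite μ]
    (hsupp : ∃ T : Finset ℝ, M ≤ T.card ∧ ↑T ⊆ measureSupport μ) :
    0 < Measure.pi (fun _ : Fin M => μ) {s | StrictMono s} := by
  obtain ⟨T, hcard, hT⟩ := hsupp
  exact measure_pi_pos_of_mem_nhds (fun i => hT (T.orderEmbOfCardLe_mem hcard i))
    (setOf_strictMono_mem_nhds (T.orderEmbOfCardLe hcard).strictMono)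

end OrderedSimplex

lemma integral_pos_of_ae_pos_restrict {Ω : Type*} [MeasurableSpace Ω] {ν : Measure Ω}
    {F : Ω → ℝ} (hF : 0 ≤ F) (hFi : Integrable F ν) {S : Set Ω} (hS : 0 < ν S)
    (hpos : ∀ᵐ x ∂ν.restrict S, 0 < F x) : 0 < ∫ x, F x ∂ν := by
  rw [integral_pos_iff_support_of_nonneg hF hFi]
  have hfull : Function.support F =ᵐ[ν.restrict S] (Set.univ : Set Ω) :=
    ae_eq_univ.mpr (ae_iff.mp (hpos.mono fun x hx => hx.ne'))
  calc 0 < ν S := hS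
    _ = ν.restrict S (Function.support F) := by
      rw [measure_congr hfull, Measure.restrict_apply_univ]
    _ ≤ ν (Function.support F) := Measure.restrict_le_self _

theorem stmt8_general (M : ℕ) (μ : Measure ℝ) [SigmaFinite μ] (θ : ℝ → ℝ → ℝ) (t : Fin M → ℝ)
    (h2 : ∀ σ : Equiv.Perm (Fin M),
      Integrable (fun s : Fin M → ℝ => ∏ j, θ (t (σ j)) (s j) * θ (t j) (s j))
        (Measure.pi fun _ => μ))
    (hpos : ∀ᵐ s ∂((Measure.pi fun _ : Fin M => μ).restrict {s | StrictMono s}),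
      0 < (Matrix.of fun i j : Fin M => θ (t i) (s j)).det)
    (hsupp : ∃ T : Finset ℝ, M ≤ T.card ∧ ↑T ⊆ measureSupport μ) :
    0 < (Matrix.of fun i j : Fin M => ∫ s, θ (t i) s * θ (t j) s ∂μ).det := by
  have hgram := card_perm_mul_det_integral_mul_eq_integral_det_mul_det
    (f := fun i => θ (t i)) (g := fun i => θ (t i)) h2
  refine pos_of_mul_pos_right (a := (Fintype.card (Perm (Fin M)) : ℝ)) ?_ (Nat.cast_nonneg _)
  rw [hgram]
  exact integral_pos_of_ae_pos_restrict (fun s => mul_self_nonneg _)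
    (integrable_det_mul_det h2) (measure_pi_setOf_strictMono_pos hsupp)
    (hpos.mono fun s hs => mul_pos hs hs)

/-- First half of Proposition 3.6 of the paper: if the kernel determinant is a.e. positive on
the ordered simplex and the support of the sampling measure has at least `M` points, then
the Gram determinant is positive. -/
theorem stmt8 (M : ℕ) (μ : Measure ℝ) [SigmaFinite μ] (θ : ℝ → ℝ → ℝ) (t : Fin M → ℝ)
    (h1 : ∀ i j, Integrable (fun s => θ (t i) s * θ (t j) s) μ)
    (h2 : ∀ σ : Equiv.Perm (Fin M),
      Integrable (fun s : Fin M → ℝ => ∏ j, θ (t (σ j)) (s j) * θ (t j) (s j))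
        (Measure.pi fun _ => μ))
    (hpos : ∀ᵐ s ∂((Measure.pi fun _ : Fin M => μ).restrict {s | StrictMono s}),
      0 < (Matrix.of fun i j : Fin M => θ (t i) (s j)).det)
    (hsupp : ∃ T : Finset ℝ, M ≤ T.card ∧ ↑T ⊆ measureSupport μ) :
    0 < (Matrix.of fun i j : Fin M => ∫ s, θ (t i) s * θ (t j) s ∂μ).det :=
  stmt8_general M μ θ t h2 hpos hsupp
end

section
/- For $N \geq 1$ and real numbers $x_1 < \cdots < x_N$, $y_1 < \cdots < y_N$, the determinant $\det\big(e^{x_i y_j}\big)_{1 \le i,j \le N}$ is strictly positive. -/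
/-!
A nontrivial exponential sum `∑ cⱼ e^{yⱼ t}` with `N` distinct frequencies has at most `N - 1`
real zeros: after dividing by the last exponential, Rolle's theorem yields `N - 1` zeros of the
derivative, which is an exponential sum with `N - 1` frequencies. Hence `det (e^{xᵢ yⱼ})` never
vanishes while `x` and `y` are strictly increasing. Strictly increasing `y` form a convex, hence
connected, set, and at `yⱼ = j` the matrix is the Vandermonde matrix of the `e^{xᵢ}`, whose
determinant is positive; by continuity the determinant is positive throughout.
-/

open Finset Real

theorem convex_setOf_strictMono {𝕜 ι β : Type*} [Semiring 𝕜] [PartialOrder 𝕜]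
    [IsOrderedRing 𝕜] [AddCommMonoid β] [PartialOrder β] [IsOrderedCancelAddMonoid β]
    [Module 𝕜 β] [PosSMulMono 𝕜 β] [PosSMulStrictMono 𝕜 β] [PartialOrder ι] :
    Convex 𝕜 {f : ι → β | StrictMono f} := by
  intro f (hf : StrictMono f) g (hg : StrictMono g) a b ha hb hab
  rcases ha.eq_or_lt with rfl | ha'
  · rw [zero_add] at hab
    subst hab
    simpa using hg
  · exact (hf.const_smul ha').add_monotone (hg.monotone.const_smul hb)

theorem IsPreconnected.pos_of_ne_zero {X : Type*} [TopologicalSpace X] {S : Set X}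
    (hS : IsPreconnected S) {f : X → ℝ} (hf : ContinuousOn f S) (hne : ∀ y ∈ S, f y ≠ 0)
    {a : X} (ha : a ∈ S) (hfa : 0 < f a) {b : X} (hb : b ∈ S) : 0 < f b := by
  by_contra! hfb
  obtain ⟨y, hyS, hy⟩ := hS.intermediate_value hb ha hf ⟨hfb, hfa.le⟩
  exact hne y hyS hy

theorem hasDerivAt_sum_mul_exp {ι : Type*} [Fintype ι] (c y : ι → ℝ) (t : ℝ) :
    HasDerivAt (fun t => ∑ j, c j * exp (y j * t)) (∑ j, c j * y j * exp (y j * t)) t := by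
  refine HasDerivAt.fun_sum fun j _ => ?_
  exact ((((hasDerivAt_id t).const_mul (y j)).exp).const_mul (c j)).congr_deriv (by simp; ring)

theorem exists_strictMono_hasDerivAt_eq_zero {f f' : ℝ → ℝ} (hf : ∀ t, HasDerivAt f (f' t) t)
    {n : ℕ} {x : Fin (n + 1) → ℝ} (hx : StrictMono x) (hfx : ∀ i, f (x i) = 0) :
    ∃ z : Fin n → ℝ, StrictMono z ∧ ∀ i, f' (z i) = 0 := by
  have hRolle (i : Fin n) : ∃ z ∈ Set.Ioo (x i.castSucc) (x i.succ), f' z = 0 :=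
    exists_hasDerivAt_eq_zero (hx Fin.castSucc_lt_succ)
      (HasDerivAt.continuousOn fun t _ => hf t) (by rw [hfx, hfx]) fun t _ => hf t
  choose z hz hz' using hRolle
  refine ⟨z, fun i j hij => ?_, hz'⟩
  calc z i < x i.succ := (hz i).2
    _ ≤ x j.castSucc := hx.monotone (Fin.succ_le_castSucc_iff.2 hij)
    _ < z j := (hz j).1

theorem eq_zero_of_sum_mul_exp_eq_zero :
    ∀ {N : ℕ} {c y x : Fin N → ℝ}, Function.Injective y → StrictMono x →
      (∀ i, ∑ j, c j * exp (y j * x i) = 0) → c = 0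
  | 0, c, _, _, _, _, _ => Subsingleton.elim c 0
  | N + 1, c, y, x, hy, hx, h => by
    set a := y (Fin.last N)
    -- Multiplying by `exp (-a t)` moves the last frequency to `0`, so differentiation kills it.
    have hshift (i : Fin (N + 1)) : ∑ j, c j * exp ((y j - a) * x i) = 0 := by
      have hfactor : ∑ j, c j * exp ((y j - a) * x i) =
          exp (-(a * x i)) * ∑ j, c j * exp (y j * x i) := by
        rw [mul_sum]
        refine sum_congr rfl fun j _ => ?_
        rw [sub_mul, sub_eq_add_neg, exp_add]
        ring
      rw [hfactor, h i, mul_zero]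
    obtain ⟨z, hz, hz0⟩ :=
      exists_strictMono_hasDerivAt_eq_zero (hasDerivAt_sum_mul_exp c (y · - a)) hx hshift
    have hinit : ∀ j : Fin N, c j.castSucc = 0 := by
      have hinj : Function.Injective fun j : Fin N => y j.castSucc - a :=
        fun j k hjk => Fin.castSucc_injective N (hy (sub_left_injective hjk))
      have hderiv :=
        eq_zero_of_sum_mul_exp_eq_zero (c := fun j => c j.castSucc * (y j.castSucc - a)) hinj hz
          fun i => by simpa [Fin.sum_univ_castSucc, a] using hz0 i
      intro j
      exact (mul_eq_zero.1 (congrFun hderiv j)).resolve_right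
        (sub_ne_zero.2 (hy.ne (Fin.castSucc_lt_last j).ne))
    have hlast : c (Fin.last N) = 0 := by
      simpa [Fin.sum_univ_castSucc, hinit] using h 0
    funext j
    exact Fin.lastCases hlast hinit j

theorem det_exp_mul_ne_zero {N : ℕ} {x y : Fin N → ℝ} (hx : StrictMono x)
    (hy : Function.Injective y) : (Matrix.of fun i j => exp (x i * y j)).det ≠ 0 := by
  intro hdet
  obtain ⟨c, hc, hkernel⟩ := Matrix.exists_mulVec_eq_zero_iff.2 hdet
  refine hc (eq_zero_of_sum_mul_exp_eq_zero hy hx fun i => ?_)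
  simpa [Matrix.mulVec, dotProduct, mul_comm] using congrFun hkernel i

theorem det_exp_mul_natCast_pos {N : ℕ} {x : Fin N → ℝ} (hx : StrictMono x) :
    0 < (Matrix.of fun i (j : Fin N) => exp (x i * j)).det := by
  have hvandermonde : (Matrix.of fun i (j : Fin N) => exp (x i * j)) =
      Matrix.vandermonde fun i => exp (x i) := by
    ext i j
    simp [Matrix.vandermonde, mul_comm, ← exp_nat_mul]
  rw [hvandermonde, Matrix.det_vandermonde]
  exact prod_pos fun i _ => prod_pos fun j hj =>
    sub_pos.2 (exp_lt_exp.2 (hx (mem_Ioi.1 hj)))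

theorem continuous_det_exp_mul {N : ℕ} (x : Fin N → ℝ) :
    Continuous fun y : Fin N → ℝ => (Matrix.of fun i j => exp (x i * y j)).det :=
  Continuous.matrix_det (continuous_matrix fun i j => by fun_prop)

theorem stmt11_general (N : ℕ) (x y : Fin N → ℝ)
    (hx : StrictMono x) (hy : StrictMono y) :
    0 < (Matrix.of fun i j : Fin N => Real.exp (x i * y j)).det := by
  have hS : IsPreconnected {y : Fin N → ℝ | StrictMono y} :=
    convex_setOf_strictMono.isPreconnected
  have hnat : StrictMono fun j : Fin N => (j : ℝ) := Nat.strictMono_cast.comp Fin.val_strictMono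
  exact hS.pos_of_ne_zero (continuous_det_exp_mul x).continuousOn
    (fun _ hy' => det_exp_mul_ne_zero hx hy'.injective) hnat (det_exp_mul_natCast_pos hx) hy

/-- Strict total positivity of the exponential kernel: for `x₁ < ⋯ < x_N` and
`y₁ < ⋯ < y_N`, `det(e^{xᵢ yⱼ}) > 0`. -/
theorem stmt11 (N : ℕ) (hN : 1 ≤ N) (x y : Fin N → ℝ)
    (hx : StrictMono x) (hy : StrictMono y) :
    0 < (Matrix.of fun i j : Fin N => Real.exp (x i * y j)).det :=
  stmt11_general N x y hx hy
end

section
/- (Continuity lemma for divided-difference determinants) Let $u_1,\ldots,u_n \in C^{n-1}(\mathbb{R})$. The function $U(s_1,\ldots,s_n) = \frac{1}{\prod_{1 \le i < j \le n}(s_j - s_i)} \det\big(u_j(s_i)\big)_{1\le i,j\le n}$, defined for pairwise distinct $s_i$, extends to a continuous function on $\mathbb{R}^n$, and there is a constant $\gamma > 0$ such that $U(s,\ldots,s) = \gamma \det\big(u_j^{(i-1)}(s)\big)_{1\le i,j\le n}$ for all $s \in \mathbb{R}$. -/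
open Finset intervalIntegral Function
open scoped Nat

/-!
Replace row `i` of `(u_j(s_k))` by the divided differences `u_j[s_0, …, s_i]`. For distinct nodes
these are given by the Lagrange form `∑_{k ≤ i} u_j(s_k) / ∏_{l ≤ i, l ≠ k} (s_k - s_l)`, so the new
matrix is `L · (u_j(s_k))` with `L` lower triangular, and the product of the diagonal entries of `L`
is the inverse of the Vandermonde product: the new determinant is `U`. On the other hand divided
differences satisfy the Hermite–Genocchi type recursion
`f[x_0, …, x_{k+1}] = ∫₀¹ t^k f'[x_0 + t (x_1 - x_0), …, x_0 + t (x_{k+1} - x_0)] dt`, which makes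
sense for arbitrary nodes, is continuous in them when `f ∈ C^k`, and gives `f^{(k)}(a) / k!` when all
nodes equal `a`. Hence `U` extends continuously, with `γ = ∏_{i < n} (i!)⁻¹`.
-/

theorem Fin.prod_univ_erase_succ {M : Type*} [CommMonoid M] {k : ℕ} (g : Fin (k + 1) → M)
    (i : Fin k) : ∏ l ∈ univ.erase i.succ, g l = g 0 * ∏ l ∈ univ.erase i, g l.succ := by
  rw [Fin.univ_succ, erase_cons_of_ne _ (Fin.succ_ne_zero i).symm, Finset.prod_cons]
  have h := prod_map (univ.erase i) (Fin.succEmb k) g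
  rw [map_erase] at h
  exact congrArg _ h

section LagrangeForm

variable {𝕜 ι : Type*} [Field 𝕜] [Fintype ι] [DecidableEq ι]

def lagrangeDivDiff (f : 𝕜 → 𝕜) (x : ι → 𝕜) : 𝕜 :=
  ∑ i, f (x i) / ∏ l ∈ univ.erase i, (x i - x l)

theorem lagrangeDivDiff_const (c : 𝕜) {x : ι → 𝕜} (hx : Injective x)
    (hι : 2 ≤ Fintype.card ι) : lagrangeDivDiff (fun _ => c) x = 0 := by
  -- `(∏ l ≠ i, (x i - x l))⁻¹` is the leading coefficient of the `i`-th Lagrange basis polynomial,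
  -- and these polynomials sum to `1`, whose coefficient of degree `card ι - 1 ≥ 1` vanishes.
  have hlead : ∀ i, (∏ l ∈ univ.erase i, (x i - x l))⁻¹
      = (Lagrange.basis univ x i).coeff (Fintype.card ι - 1) := by
    intro i
    have hdeg : (Lagrange.basis univ x i).natDegree = Fintype.card ι - 1 := by
      rw [Lagrange.natDegree_basis hx.injOn (mem_univ i), card_univ]
    rw [← hdeg, Polynomial.coeff_natDegree, Lagrange.basis, Polynomial.leadingCoeff_prod,
      ← prod_inv_distrib]
    refine prod_congr rfl fun l _ => ?_
    rw [Lagrange.basisDivisor, Polynomial.leadingCoeff_mul, Polynomial.leadingCoeff_C,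
      (Polynomial.monic_X_sub_C (x l)).leadingCoeff, mul_one]
  have hne : (univ : Finset ι).Nonempty := card_pos.mp (by rw [card_univ]; omega)
  have hsum : ∑ i, (∏ l ∈ univ.erase i, (x i - x l))⁻¹ = 0 := by
    simp_rw [hlead, ← Polynomial.finsetSum_coeff, Lagrange.sum_basis hx.injOn hne,
      Polynomial.coeff_one]
    exact if_neg (by omega)
  simp only [lagrangeDivDiff, div_eq_mul_inv, ← mul_sum, hsum, mul_zero]

theorem lagrangeDivDiff_eq_slope_tail {k : ℕ} (f : 𝕜 → 𝕜) {x : Fin (k + 2) → 𝕜}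
    (hx : Injective x) : lagrangeDivDiff f x = lagrangeDivDiff (slope f (x 0)) (Fin.tail x) := by
  have hconst := lagrangeDivDiff_const (f (x 0)) hx (by simp)
  simp only [lagrangeDivDiff, Fin.sum_univ_succ, Fin.prod_univ_erase_succ, slope_def_field,
    Fin.tail, div_div, sub_div, sum_sub_distrib] at hconst ⊢
  linear_combination hconst

theorem pow_mul_lagrangeDivDiff_homothety (g : 𝕜 → 𝕜) (a : 𝕜) (x : ι → 𝕜) {t : 𝕜} (ht : t ≠ 0) :
    t ^ (Fintype.card ι - 1) * lagrangeDivDiff g (fun i => a + t * (x i - a))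
      = lagrangeDivDiff (fun y => g (a + t * (y - a))) x := by
  simp only [lagrangeDivDiff, mul_sum]
  refine sum_congr rfl fun i _ => ?_
  have hprod : ∏ l ∈ univ.erase i, (a + t * (x i - a) - (a + t * (x l - a)))
      = t ^ (Fintype.card ι - 1) * ∏ l ∈ univ.erase i, (x i - x l) := by
    rw [← card_univ, ← card_erase_of_mem (mem_univ i), ← prod_const, ← prod_mul_distrib]
    exact prod_congr rfl fun l _ => by ring
  rw [hprod, ← mul_div_assoc, mul_div_mul_left _ _ (pow_ne_zero _ ht)]

theorem lagrangeDivDiff_comp_castLE {n : ℕ} (f : 𝕜 → 𝕜) (x : Fin n → 𝕜)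
    (i : Fin n) : lagrangeDivDiff f (x ∘ Fin.castLE i.isLt)
      = ∑ k ∈ Iic i, f (x k) / ∏ l ∈ (Iic i).erase k, (x k - x l) := by
  have himage : (univ : Finset (Fin (i + 1))).map (Fin.castLEEmb i.isLt) = Iic i := by
    rw [← Iic_top, Fin.map_castLEEmb_Iic]
    rfl
  simp only [lagrangeDivDiff, ← himage, sum_map, ← map_erase, prod_map]
  rfl

end LagrangeForm

/-- The divided difference `f[x_0, …, x_k]`, defined through its integral representation so that
it makes sense at coincident nodes. -/
noncomputable def dividedDiff : (k : ℕ) → (ℝ → ℝ) → (Fin (k + 1) → ℝ) → ℝ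
  | 0, f, x => f (x 0)
  | k + 1, f, x =>
    ∫ t in (0 : ℝ)..1, t ^ k * dividedDiff k (deriv f) (fun i => x 0 + t * (Fin.tail x i - x 0))

section

variable {k : ℕ} {f : ℝ → ℝ}

theorem continuous_dividedDiff (hf : ContDiff ℝ k f) : Continuous (dividedDiff k f) := by
  induction k generalizing f with
  | zero => exact hf.continuous.comp (continuous_apply 0)
  | succ k ih =>
    have hint : Continuous (uncurry fun (x : Fin (k + 2) → ℝ) (t : ℝ) =>
        t ^ k * dividedDiff k (deriv f) (fun i => x 0 + t * (Fin.tail x i - x 0))) :=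
      (continuous_snd.pow k).mul <| (ih hf.deriv').comp <|
        continuous_pi fun i => by simp only [Fin.tail]; fun_prop
    exact continuous_parametric_intervalIntegral_of_continuous' hint 0 1

theorem dividedDiff_const_nodes (hf : ContDiff ℝ k f) (a : ℝ) :
    dividedDiff k f (fun _ => a) = iteratedDeriv k f a / (k ! : ℝ) := by
  induction k generalizing f with
  | zero => simp [dividedDiff]
  | succ k ih =>
    simp only [dividedDiff, Fin.tail, sub_self, mul_zero, add_zero,
      ih hf.deriv', integral_mul_const, integral_pow, iteratedDeriv_succ',
      Nat.factorial_succ]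
    push_cast
    field_simp
    simp

theorem integral_deriv_comp_segment (hf : ContDiff ℝ 1 f) {a b : ℝ} (hab : b ≠ a) :
    ∫ t in (0 : ℝ)..1, deriv f (a + t * (b - a)) = slope f a b := by
  simp_rw [mul_comm _ (b - a)]
  rw [integral_comp_add_mul _ (sub_ne_zero.mpr hab), mul_zero, add_zero, mul_one,
    add_sub_cancel, integral_deriv_eq_sub (fun x _ => hf.differentiable one_ne_zero x)
      ((hf.continuous_deriv le_rfl).intervalIntegrable a b), slope_def_field, smul_eq_mul,
    inv_mul_eq_div]

theorem dividedDiff_eq_lagrangeDivDiff (hf : ContDiff ℝ k f)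
    {x : Fin (k + 1) → ℝ} (hx : Injective x) : dividedDiff k f x = lagrangeDivDiff f x := by
  induction k generalizing f with
  | zero => simp [dividedDiff, lagrangeDivDiff]
  | succ k ih =>
    set y : ℝ → Fin (k + 1) → ℝ := fun t i => x 0 + t * (Fin.tail x i - x 0)
    have hy : ∀ t ≠ 0, Injective (y t) := fun t ht i l h =>
      Fin.succ_injective _ <| hx <| by simpa [y, Fin.tail, ht, sub_left_inj] using h
    have hpointwise : ∀ t ≠ 0, t ^ k * dividedDiff k (deriv f) (y t)
        = lagrangeDivDiff (fun z => deriv f (x 0 + t * (z - x 0))) (Fin.tail x) := fun t ht => by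
      rw [ih hf.deriv' (hy t ht), ← pow_mul_lagrangeDivDiff_homothety _ _ _ ht,
        Fintype.card_fin, Nat.add_sub_cancel]
    have hcont : ∀ z, Continuous fun t => deriv f (x 0 + t * (z - x 0)) := fun z =>
      (hf.deriv' (n := k)).continuous.comp (by fun_prop)
    calc dividedDiff (k + 1) f x
        = ∫ t in (0 : ℝ)..1, lagrangeDivDiff (fun z => deriv f (x 0 + t * (z - x 0)))
            (Fin.tail x) := by
          refine integral_congr_ae (.of_forall fun t ht => hpointwise t ?_)
          rw [Set.uIoc_of_le zero_le_one] at ht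
          exact ht.1.ne'
      _ = lagrangeDivDiff (slope f (x 0)) (Fin.tail x) := by
          simp only [lagrangeDivDiff]
          rw [integral_finsetSum fun i _ => ((hcont _).div_const _).intervalIntegrable 0 1]
          refine sum_congr rfl fun i _ => ?_
          rw [integral_div, integral_deriv_comp_segment (b := Fin.tail x i) (hf.of_le (by simp))
            (hx.ne (Fin.succ_ne_zero i))]
      _ = lagrangeDivDiff f x := (lagrangeDivDiff_eq_slope_tail f hx).symm

end

section Determinant

variable {n : ℕ}

noncomputable def divDiffMatrix (u : Fin n → ℝ → ℝ) (s : Fin n → ℝ) :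
    Matrix (Fin n) (Fin n) ℝ :=
  Matrix.of fun i j => dividedDiff i (u j) (s ∘ Fin.castLE i.isLt)

noncomputable def lagrangeWeightMatrix (s : Fin n → ℝ) : Matrix (Fin n) (Fin n) ℝ :=
  Matrix.of fun i k => if k ≤ i then (∏ l ∈ (Iic i).erase k, (s k - s l))⁻¹ else 0

theorem divDiffMatrix_eq_lagrangeWeightMatrix_mul {u : Fin n → ℝ → ℝ}
    (hu : ∀ i j : Fin n, ContDiff ℝ i (u j)) {s : Fin n → ℝ} (hs : Injective s) :
    divDiffMatrix u s = lagrangeWeightMatrix s * Matrix.of fun i j => u j (s i) := by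
  ext i j
  rw [divDiffMatrix, Matrix.of_apply,
    dividedDiff_eq_lagrangeDivDiff (hu i j) (hs.comp (Fin.castLE_injective _)),
    lagrangeDivDiff_comp_castLE, Matrix.mul_apply, ← filter_ge_eq_Iic, sum_filter]
  refine sum_congr rfl fun k _ => ?_
  simp only [lagrangeWeightMatrix, Matrix.of_apply, ite_mul, zero_mul, filter_ge_eq_Iic]
  split_ifs <;> ring

theorem det_lagrangeWeightMatrix (s : Fin n → ℝ) :
    (lagrangeWeightMatrix s).det
      = (∏ p ∈ univ.filter (fun p : Fin n × Fin n => p.1 < p.2), (s p.2 - s p.1))⁻¹ := by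
  rw [Matrix.det_of_isLowerTriangular (lagrangeWeightMatrix s) fun i k (hik : i < k) =>
      if_neg (not_le.mpr hik),
    prod_finset_product_right' (f := fun l i => s i - s l) _ univ (fun i => Iio i) (by simp),
    ← prod_inv_distrib]
  simp [lagrangeWeightMatrix, Iic_erase]

end Determinant

theorem stmt16_general (n : ℕ) (u : Fin n → ℝ → ℝ)
    (hu : ∀ j, ContDiff ℝ (n - 1) (u j)) :
    ∃ U : (Fin n → ℝ) → ℝ, Continuous U ∧
      (∀ s : Fin n → ℝ, Function.Injective s →
        U s = (1 / ∏ p ∈ Finset.univ.filter (fun p : Fin n × Fin n => p.1 < p.2),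
                (s p.2 - s p.1)) *
          (Matrix.of fun i j : Fin n => u j (s i)).det) ∧
      ∃ γ : ℝ, 0 < γ ∧ ∀ a : ℝ,
        U (fun _ => a) = γ * (Matrix.of fun i j : Fin n => iteratedDeriv i.val (u j) a).det := by
  have hu' : ∀ i j : Fin n, ContDiff ℝ i (u j) := fun i j =>
    (hu j).of_le (by exact_mod_cast Nat.cast_le.mpr (Nat.le_sub_one_of_lt i.isLt))
  refine ⟨fun s => (divDiffMatrix u s).det, ?_, fun s hs => ?_,
    ∏ i : Fin n, ((i : ℕ)! : ℝ)⁻¹, by positivity, fun a => ?_⟩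
  · exact (continuous_matrix fun i j => (continuous_dividedDiff (hu' i j)).comp
      (continuous_pi fun l => continuous_apply _)).matrix_det
  · dsimp only
    rw [divDiffMatrix_eq_lagrangeWeightMatrix_mul hu' hs, Matrix.det_mul,
      det_lagrangeWeightMatrix, one_div]
  · dsimp only
    rw [← Matrix.det_mul_column]
    congr 1
    ext i j
    simp [divDiffMatrix, Function.comp_def, dividedDiff_const_nodes (hu' i j), div_eq_inv_mul]

/-- Lemma A.1 of the paper (continuity of divided-difference determinants): the rescaled
Vandermonde-type determinant extends continuously to `ℝⁿ`, with value on the diagonal a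
positive multiple of the Wronskian-type determinant. -/
theorem stmt16 (n : ℕ) (hn : 1 ≤ n) (u : Fin n → ℝ → ℝ)
    (hu : ∀ j, ContDiff ℝ (n - 1) (u j)) :
    ∃ U : (Fin n → ℝ) → ℝ, Continuous U ∧
      (∀ s : Fin n → ℝ, Function.Injective s →
        U s = (1 / ∏ p ∈ Finset.univ.filter (fun p : Fin n × Fin n => p.1 < p.2),
                (s p.2 - s p.1)) *
          (Matrix.of fun i j : Fin n => u j (s i)).det) ∧
      ∃ γ : ℝ, 0 < γ ∧ ∀ a : ℝ,
        U (fun _ => a) = γ * (Matrix.of fun i j : Fin n => iteratedDeriv i.val (u j) a).det :=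
  stmt16_general n u hu
end

section
/- (Necessary and sufficient determinant criterion for the NDSC) Let $H$ be a real Hilbert space, $\varphi : D \to H$ of class $C^2$ with the required boundedness, $x_1 < \cdots < x_M$ in the interior of the interval $D$, and suppose $\Gamma_x = (\varphi(x_1), \varphi'(x_1), \ldots, \varphi(x_M), \varphi'(x_M))$ has full column rank. Let $C(x,y) = \langle \varphi(x), \varphi(y)\rangle$, set $(u_0, u_1, u_2, \ldots, u_{2M}) = (1, C(\cdot,x_1), \partial_2 C(\cdot,x_1), \ldots, C(\cdot,x_M), \partial_2 C(\cdot,x_M))$, and let $D_V$ be the continuous extension of $t \mapsto \frac{2}{\prod_i (t-x_i)^2}\det\big(\text{row } (u_j(t))_j \text{ above rows } (u_j(x_i))_j, (u_j'(x_i))_j\big)$. Then the Non-Degenerate Source Condition for $m_0 = \sum_i a_i \delta_{x_i}$ (with all $a_i > 0$) — namely, the vanishing-derivatives precertificate $\eta_V$ satisfies $\eta_V(t) < 1$ for all $t \in D \setminus \{x_i\}$ and $\eta_V''(x_i) < 0$ for all $i$ — holds if and only if $D_V(t) > 0$ for all $t \in D$. -/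
/-!
The minimal-norm interpolant `pV` lies in the span of the columns `v_q` of `Γ_x`
(`φ(xᵢ)` and `φ'(xᵢ)`), say `pV = ∑ α_q v_q`; the interpolation conditions say that `α` solves the
Gram system `G α = e`. Subtracting `∑ α_q` times the corresponding columns from the first column of
the bordered determinant clears that column below its first entry, which becomes `1 - η_V(t)`; so
the determinant is `(1 - η_V(t)) · det G`, and `det G > 0` by linear independence. Off the nodes
this gives `D_V(t) > 0 ↔ η_V(t) < 1`. At a node `xᵢ`, `1 - η_V` vanishes to second order, so by
continuity `D_V(xᵢ) = -η_V''(xᵢ) · det G / ∏_{j ≠ i} (xᵢ - xⱼ)²`, whose sign is that of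
`-η_V''(xᵢ)`.
-/

open scoped BigOperators

/-- The family `(1, C(·,x₁), ∂₂C(·,x₁), …, C(·,x_M), ∂₂C(·,x_M))` of correlation functions,
where `C(t,y) = ⟪φ(t), φ(y)⟫`; `none` indexes the constant function `1`. -/
noncomputable def corrFam {H : Type*} [NormedAddCommGroup H] [InnerProductSpace ℝ H]
    {M : ℕ} (φ : ℝ → H) (x : Fin M → ℝ) : Option (Fin M × Fin 2) → ℝ → ℝ
  | none => fun _ => 1
  | some (j, e) =>
    if e = 0 then fun t => (inner ℝ (φ t) (φ (x j)) : ℝ)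
    else fun t => (inner ℝ (φ t) (deriv φ (x j)) : ℝ)

open Filter Topology Finset
open scoped RealInnerProductSpace

theorem tendsto_sub_div_sq_of_deriv_eq_zero {f : ℝ → ℝ} {a : ℝ} (hf : ContDiff ℝ 2 f)
    (ha : deriv f a = 0) :
    Tendsto (fun t => (f t - f a) / (t - a) ^ 2) (𝓝[≠] a) (𝓝 (iteratedDeriv 2 f a / 2)) := by
  have hdf : Differentiable ℝ f := hf.differentiable (by norm_num)
  have hslope : Tendsto (slope (deriv f) a) (𝓝[≠] a) (𝓝 (iteratedDeriv 2 f a)) := by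
    rw [iteratedDeriv_succ, iteratedDeriv_one]
    exact hasDerivAt_iff_tendsto_slope.mp
      ((iteratedDeriv_one (f := f) ▸ hf.differentiable_iteratedDeriv' 1) a).hasDerivAt
  refine HasDerivAt.lhopital_zero_nhdsNE (f' := deriv f) (g' := fun t => 2 * (t - a))
    (.of_forall fun t => ((hdf t).hasDerivAt.sub_const (f a)))
    (.of_forall fun t => by simpa using ((hasDerivAt_id t).sub_const a).fun_pow 2)
    (eventually_nhdsWithin_of_forall fun t ht => mul_ne_zero two_ne_zero (sub_ne_zero.mpr ht))
    ?_ ?_ ((hslope.div_const 2).congr fun t => ?_)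
  · exact tendsto_nhdsWithin_of_tendsto_nhds
      ((hdf.continuous.sub continuous_const).tendsto' a 0 (sub_self _))
  · exact tendsto_nhdsWithin_of_tendsto_nhds
      (((continuous_sub_right a).pow 2).tendsto' a 0 (by simp))
  · rw [slope_def_field, ha, sub_zero, div_div, mul_comm]

theorem deriv_inner_const {E : Type*} [NormedAddCommGroup E] [InnerProductSpace ℝ E]
    {f : ℝ → E} {t : ℝ} (hf : DifferentiableAt ℝ f t) (w : E) :
    deriv (fun s => ⟪f s, w⟫) t = ⟪deriv f t, w⟫ := by
  simp [deriv_inner_apply ℝ hf (differentiableAt_const w)]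

theorem Submodule.mem_of_forall_sub_mem_orthogonal_norm_le {𝕜 E : Type*} [RCLike 𝕜]
    [NormedAddCommGroup E] [InnerProductSpace 𝕜 E] {K : Submodule 𝕜 E} [K.HasOrthogonalProjection]
    {p : E} (hp : ∀ q, p - q ∈ Kᗮ → ‖p‖ ≤ ‖q‖) : p ∈ K := by
  refine (K.mem_iff_norm_starProjection p).mpr (le_antisymm (K.norm_starProjection_apply_le p) ?_)
  exact hp _ (K.sub_starProjection_mem_orthogonal p)

theorem mem_span_range_of_forall_inner_eq_norm_le {𝕜 E ι : Type*} [RCLike 𝕜]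
    [NormedAddCommGroup E] [InnerProductSpace 𝕜 E] [Finite ι] {v : ι → E} {p : E}
    (hp : ∀ q, (∀ i, inner 𝕜 (v i) q = inner 𝕜 (v i) p) → ‖p‖ ≤ ‖q‖) :
    p ∈ Submodule.span 𝕜 (Set.range v) := by
  have := FiniteDimensional.span_of_finite 𝕜 (Set.finite_range v)
  refine Submodule.mem_of_forall_sub_mem_orthogonal_norm_le fun q hq => hp q fun i => ?_
  rw [eq_comm, ← sub_eq_zero, ← inner_sub_right]
  exact Submodule.inner_right_of_mem_orthogonal (Submodule.subset_span (Set.mem_range_self i)) hq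

theorem Matrix.det_option_eq_of_col_eq_sum {R ι : Type*} [CommRing R] [Fintype ι] [DecidableEq ι]
    (A : Matrix (Option ι) (Option ι) R) (α : ι → R)
    (hα : ∀ p, A (some p) none = ∑ q, A (some p) (some q) * α q) :
    A.det = (A none none - ∑ q, A none (some q) * α q) * (A.submatrix some some).det := by
  set c : Option ι → R := fun r => r.elim 1 (fun q => -α q)
  have hcol : (A.updateCol none fun k => ∑ r, c r • A k r).det = A.det := by
    rw [det_updateCol_sum]; simp [c]
  have hblocks : (A.updateCol none fun k => ∑ r, c r • A k r).submatrix
      (Equiv.optionEquivSumPUnit.{0} ι).symm (Equiv.optionEquivSumPUnit.{0} ι).symm =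
      fromBlocks (A.submatrix some some) 0 (of fun _ q => A none (some q))
        (of fun _ _ => A none none - ∑ q, A none (some q) * α q) := by
    ext (p | _) (q | _) <;> simp [c, hα, Fintype.sum_option, sub_eq_add_neg, mul_comm]
  rw [← hcol, ← det_submatrix_equiv_self (Equiv.optionEquivSumPUnit.{0} ι).symm, hblocks,
    det_fromBlocks_zero₁₂, mul_comm, det_unique (of fun _ _ : PUnit => _), of_apply]

section Correlation

variable {H : Type*} [NormedAddCommGroup H] [InnerProductSpace ℝ H] {M : ℕ} (φ : ℝ → H)
  (x : Fin M → ℝ)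

noncomputable def jetFamily (p : Fin M × Fin 2) : H :=
  if p.2 = 0 then φ (x p.1) else deriv φ (x p.1)

noncomputable def corrMatrix (t : ℝ) : Matrix (Option (Fin M × Fin 2)) (Option (Fin M × Fin 2)) ℝ :=
  Matrix.of fun r c =>
    match r with
    | none => corrFam φ x c t
    | some (i, e) => if e = 0 then corrFam φ x c (x i) else deriv (corrFam φ x c) (x i)

theorem corrFam_some (q : Fin M × Fin 2) :
    corrFam φ x (some q) = fun s => ⟪φ s, jetFamily φ x q⟫ := by
  obtain ⟨j, e⟩ := q
  by_cases he : e = 0 <;> simp [corrFam, jetFamily, he]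

variable {φ}

theorem corrMatrix_some_none (t : ℝ) (p : Fin M × Fin 2) :
    corrMatrix φ x t (some p) none = if p.2 = 0 then 1 else 0 := by
  obtain ⟨i, e⟩ := p
  by_cases he : e = 0 <;> simp [corrMatrix, corrFam, he]

theorem corrMatrix_some_some (hφ : Differentiable ℝ φ) (t : ℝ) (p q : Fin M × Fin 2) :
    corrMatrix φ x t (some p) (some q) = Matrix.gram ℝ (jetFamily φ x) p q := by
  obtain ⟨i, e⟩ := p
  by_cases he : e = 0 <;>
    simp [corrMatrix, corrFam_some, jetFamily, he, deriv_inner_const (hφ _), Matrix.gram]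

theorem det_corrMatrix (hφ : Differentiable ℝ φ) {pV : H}
    (hspan : pV ∈ Submodule.span ℝ (Set.range (jetFamily φ x)))
    (hpV : ∀ p, ⟪jetFamily φ x p, pV⟫ = if p.2 = 0 then 1 else 0) (t : ℝ) :
    (corrMatrix φ x t).det = (1 - ⟪φ t, pV⟫) * (Matrix.gram ℝ (jetFamily φ x)).det := by
  obtain ⟨α, rfl⟩ := (Submodule.mem_span_range_iff_exists_fun ℝ).mp hspan
  have hsub : (corrMatrix φ x t).submatrix some some = Matrix.gram ℝ (jetFamily φ x) := by
    ext p q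
    exact corrMatrix_some_some x hφ t p q
  rw [Matrix.det_option_eq_of_col_eq_sum _ α fun p => ?_, hsub]
  · simp only [corrMatrix, Matrix.of_apply, corrFam_some]
    simp [corrFam, inner_sum, real_inner_smul_right, mul_comm]
  · simp [corrMatrix_some_none, ← hpV, corrMatrix_some_some x hφ, Matrix.gram, inner_sum,
      real_inner_smul_right, mul_comm]

end Correlation

section Nodes

theorem prod_sq_sub_pos {ι : Type*} {x : ι → ℝ} {s : Finset ι} {t : ℝ} (ht : ∀ j ∈ s, t ≠ x j) :
    0 < ∏ j ∈ s, (t - x j) ^ 2 :=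
  prod_pos fun j hj => sq_pos_of_ne_zero (sub_ne_zero.mpr (ht j hj))

variable {ι : Type*} [Fintype ι] [DecidableEq ι] {x : ι → ℝ} {η : ℝ → ℝ}

theorem tendsto_two_div_prod_sq_mul (hx : Function.Injective x) (hη : ContDiff ℝ 2 η) {i : ι}
    (h1 : η (x i) = 1) (h2 : deriv η (x i) = 0) (c : ℝ) :
    Tendsto (fun t => (2 / ∏ j, (t - x j) ^ 2) * ((1 - η t) * c)) (𝓝[≠] (x i))
      (𝓝 (-(iteratedDeriv 2 η (x i) * c) / ∏ j ∈ univ.erase i, (x i - x j) ^ 2)) := by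
  have hP : 0 < ∏ j ∈ univ.erase i, (x i - x j) ^ 2 :=
    prod_sq_sub_pos fun j hj => hx.ne (ne_of_mem_erase hj).symm
  have hrest : Tendsto (fun t => 2 * c / ∏ j ∈ univ.erase i, (t - x j) ^ 2) (𝓝[≠] (x i))
      (𝓝 (2 * c / ∏ j ∈ univ.erase i, (x i - x j) ^ 2)) :=
    (tendsto_const_nhds.div ((continuous_finsetProd _ fun j _ =>
      (continuous_sub_right (x j)).pow 2).tendsto (x i)) hP.ne').mono_left nhdsWithin_le_nhds
  convert (tendsto_sub_div_sq_of_deriv_eq_zero hη h2).neg.mul hrest using 1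
  · funext t
    rw [← mul_prod_erase univ (fun j => (t - x j) ^ 2) (mem_univ i), h1]
    simp only [div_eq_mul_inv, mul_inv]
    ring
  · field_simp

theorem forall_pos_iff_of_eq_two_div_prod_sq_mul {D : Set ℝ} {F : ℝ → ℝ} {c : ℝ} (hc : 0 < c)
    (hx : Function.Injective x) (hxD : ∀ i, x i ∈ interior D) (hη : ContDiff ℝ 2 η)
    (h1 : ∀ i, η (x i) = 1) (h2 : ∀ i, deriv η (x i) = 0) (hFc : ContinuousOn F D)
    (hF : ∀ t ∈ D, t ∉ Set.range x → F t = (2 / ∏ j, (t - x j) ^ 2) * ((1 - η t) * c)) :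
    ((∀ t ∈ D, t ∉ Set.range x → η t < 1) ∧ ∀ i, iteratedDeriv 2 η (x i) < 0) ↔
      ∀ t ∈ D, 0 < F t := by
  have hoff : ∀ t ∈ D, t ∉ Set.range x → (0 < F t ↔ η t < 1) := by
    intro t ht htx
    have hprod : 0 < ∏ j, (t - x j) ^ 2 :=
      prod_sq_sub_pos fun j _ h => htx ⟨j, h.symm⟩
    rw [hF t ht htx, mul_pos_iff_of_pos_left (div_pos two_pos hprod),
      mul_pos_iff_of_pos_right hc, sub_pos]
  have hnode : ∀ i, 0 < F (x i) ↔ iteratedDeriv 2 η (x i) < 0 := by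
    intro i
    have hDi : D ∈ 𝓝 (x i) := mem_interior_iff_mem_nhds.mp (hxD i)
    have hev : D \ Set.range x ∈ 𝓝[≠] (x i) :=
      nhdsNE_of_nhdsNE_sdiff_finite (mem_nhdsWithin_of_mem_nhds hDi) inferInstance
    have hval := tendsto_nhds_unique
      ((hFc.continuousAt hDi).tendsto.mono_left nhdsWithin_le_nhds)
      ((tendsto_two_div_prod_sq_mul hx hη (h1 i) (h2 i) c).congr'
        (by filter_upwards [hev] with t ⟨ht, htx⟩ using (hF t ht htx).symm))
    have hP : 0 < ∏ j ∈ univ.erase i, (x i - x j) ^ 2 :=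
      prod_sq_sub_pos fun j hj => hx.ne (ne_of_mem_erase hj).symm
    rw [hval, div_pos_iff_of_pos_right hP, neg_pos]
    simp [mul_neg_iff, hc, hc.not_gt]
  constructor
  · rintro ⟨hlt, hneg⟩ t ht
    by_cases htx : t ∈ Set.range x
    · obtain ⟨i, rfl⟩ := htx
      exact (hnode i).mpr (hneg i)
    · exact (hoff t ht htx).mpr (hlt t ht htx)
  · intro hpos
    exact ⟨fun t ht htx => (hoff t ht htx).mp (hpos t ht),
      fun i => (hnode i).mp (hpos _ (interior_subset (hxD i)))⟩

end Nodes

theorem stmt19_general {H : Type*} [NormedAddCommGroup H] [InnerProductSpace ℝ H]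
    (M : ℕ) (D : Set ℝ)
    (φ : ℝ → H) (hφ : ContDiff ℝ 2 φ)
    (x : Fin M → ℝ) (hxD : ∀ i, x i ∈ interior D)
    (hlin : LinearIndependent ℝ (fun p : Fin M × Fin 2 =>
      if p.2 = 0 then φ (x p.1) else deriv φ (x p.1)))
    (pV : H)
    (hpV1 : ∀ i, (inner ℝ (φ (x i)) pV : ℝ) = 1)
    (hpV2 : ∀ i, (inner ℝ (deriv φ (x i)) pV : ℝ) = 0)
    (hmin : ∀ q : H, (∀ i, (inner ℝ (φ (x i)) q : ℝ) = 1) →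
      (∀ i, (inner ℝ (deriv φ (x i)) q : ℝ) = 0) → ‖pV‖ ≤ ‖q‖)
    (F : ℝ → ℝ) (hFc : ContinuousOn F D)
    (hF : ∀ t ∈ D, t ∉ Set.range x →
      F t = (2 / ∏ i, (t - x i) ^ 2) *
        (Matrix.of fun r c : Option (Fin M × Fin 2) =>
          match r with
          | none => corrFam φ x c t
          | some (i, e) =>
            if e = 0 then corrFam φ x c (x i) else deriv (corrFam φ x c) (x i)).det) :
    ((∀ t ∈ D, t ∉ Set.range x → (inner ℝ (φ t) pV : ℝ) < 1) ∧
      (∀ i, iteratedDeriv 2 (fun t => (inner ℝ (φ t) pV : ℝ)) (x i) < 0)) ↔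
    (∀ t ∈ D, 0 < F t) := by
  have hφd : Differentiable ℝ φ := hφ.differentiable (by norm_num)
  have hx : Function.Injective x := fun i j h =>
    congrArg Prod.fst (hlin.injective (a₁ := (i, 0)) (a₂ := (j, 0)) (by simp [h]))
  have hpV : ∀ p, ⟪jetFamily φ x p, pV⟫ = if p.2 = 0 then 1 else 0 := by
    rintro ⟨i, e⟩
    by_cases he : e = 0 <;> simp [jetFamily, he, hpV1, hpV2]
  have hspan : pV ∈ Submodule.span ℝ (Set.range (jetFamily φ x)) :=
    mem_span_range_of_forall_inner_eq_norm_le (v := jetFamily φ x) fun q hq =>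
      hmin q (fun i => by simpa [jetFamily, hpV1] using hq (i, 0))
        (fun i => by simpa [jetFamily, hpV2] using hq (i, 1))
  refine forall_pos_iff_of_eq_two_div_prod_sq_mul
    (Matrix.posDef_gram_of_linearIndependent hlin).det_pos hx hxD (hφ.inner ℝ contDiff_const)
    hpV1 (fun i => (deriv_inner_const (hφd _) pV).trans (hpV2 i)) hFc fun t ht htx => ?_
  rw [hF t ht htx]
  exact congrArg _ (det_corrMatrix x hφd hspan hpV t)

/-- Theorem 3.4 of the paper: the Non-Degenerate Source Condition holds for
`m₀ = ∑ aᵢ δ_{xᵢ}` (with `aᵢ > 0`) if and only if the continuous extension `F` of the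
rescaled determinant `D_V` is strictly positive on `D`. -/
theorem stmt19 {H : Type*} [NormedAddCommGroup H] [InnerProductSpace ℝ H] [CompleteSpace H]
    (M : ℕ) (hM : 1 ≤ M) (D : Set ℝ) (hD : D.OrdConnected)
    (φ : ℝ → H) (hφ : ContDiff ℝ 2 φ)
    (x : Fin M → ℝ) (hx : StrictMono x) (hxD : ∀ i, x i ∈ interior D)
    (a : Fin M → ℝ) (ha : ∀ i, 0 < a i)
    (hlin : LinearIndependent ℝ (fun p : Fin M × Fin 2 =>
      if p.2 = 0 then φ (x p.1) else deriv φ (x p.1)))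
    (pV : H)
    (hpV1 : ∀ i, (inner ℝ (φ (x i)) pV : ℝ) = 1)
    (hpV2 : ∀ i, (inner ℝ (deriv φ (x i)) pV : ℝ) = 0)
    (hmin : ∀ q : H, (∀ i, (inner ℝ (φ (x i)) q : ℝ) = 1) →
      (∀ i, (inner ℝ (deriv φ (x i)) q : ℝ) = 0) → ‖pV‖ ≤ ‖q‖)
    (F : ℝ → ℝ) (hFc : ContinuousOn F D)
    (hF : ∀ t ∈ D, t ∉ Set.range x →
      F t = (2 / ∏ i, (t - x i) ^ 2) *
        (Matrix.of fun r c : Option (Fin M × Fin 2) =>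
          match r with
          | none => corrFam φ x c t
          | some (i, e) =>
            if e = 0 then corrFam φ x c (x i) else deriv (corrFam φ x c) (x i)).det) :
    ((∀ t ∈ D, t ∉ Set.range x → (inner ℝ (φ t) pV : ℝ) < 1) ∧
      (∀ i, iteratedDeriv 2 (fun t => (inner ℝ (φ t) pV : ℝ)) (x i) < 0)) ↔
    (∀ t ∈ D, 0 < F t) :=
  stmt19_general M D φ hφ x hxD hlin pV hpV1 hpV2 hmin F hFc hF
end
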